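/- arXiv:0901.4168 — 2 statements merged into one kernel-verified Lean document; each statement's English description precedes it below -/
import Mathlib

section
/- Assume the primitive divisor hypothesis. Then for all integers k, n ≥ 1: S_k ⊆ S_n if and only if k divides n. In particular, if n₁, n₂ ≥ 1 satisfy S_{n₁} = S_{n₂}, then n₁ = n₂. -/
open IsDedekindDomain IsDedekindDomain.HeightOneSpectrum NumberField WeierstrassCurve Filter

open scoped Classical in
/-- The normalized additive valuation of `K` at the prime `q` (with `ordAt q 0 = 0`). -/
noncomputable def ordAt {K : Type*} [Field K] [NumberField K]
    (q : HeightOneSpectrum (𝓞 K)) (z : K) : ℤ :=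
  if hz : z = 0 then 0
  else -Multiplicative.toAdd (WithZero.unzero ((q.valuation K).ne_zero_iff.mpr hz))

/-!
Fix a prime `q` outside `Sbad`. The points whose `x`-coordinate has negative `q`-adic valuation,
together with the origin, form a subgroup of `E(K)` (the kernel of reduction), so the `n` with
`q ∈ S n` are the nonzero multiples of a single integer `m_q`. A primitive divisor `q` of `ℓ ^ j`
has `ℓ ^ j` but not `ℓ ^ (j - 1)` in that subgroup, hence `m_q = ℓ ^ j` and `q ∈ S n ↔ ℓ ^ j ∣ n`.
So `S k ⊆ S n` forces every prime power dividing `k` to divide `n`.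
-/

section ShortWeierstrass

variable {K Γ₀ : Type*} [Field K] [LinearOrderedCommGroupWithZero Γ₀] (v : Valuation K Γ₀)
  {A B : K}

lemma Valuation.sq_eq_pow_three_of_shortWeierstrass (hA : v A ≤ 1) (hB : v B ≤ 1) {x y : K}
    (h : y ^ 2 = x ^ 3 + A * x + B) (hx : 1 < v x) : v y ^ 2 = v x ^ 3 := by
  have hlin : v (A * x + B) < v (x ^ 3) := by
    refine lt_of_le_of_lt (v.map_add_le ?_ (hB.trans hx.le)) ?_
    · simpa [map_mul] using mul_le_of_le_one_left' hA
    · simpa using lt_self_pow₀ hx (by norm_num)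
  rw [← map_pow, h, add_assoc, v.map_add_eq_of_lt_left hlin, map_pow]

lemma Valuation.le_one_of_shortWeierstrass (hA : v A ≤ 1) (hB : v B ≤ 1) {x y : K}
    (h : y ^ 2 = x ^ 3 + A * x + B) (hx : v x ≤ 1) : v y ≤ 1 := by
  have hx3 : v (x ^ 3) ≤ 1 := by simpa using pow_le_one' hx 3
  have hAx : v (A * x) ≤ 1 := by simpa using mul_le_one' hA hx
  rw [← pow_le_one_iff two_ne_zero, ← map_pow, h]
  exact v.map_add_le (v.map_add_le hx3 hAx) hB

lemma Valuation.sq_slope_eq_of_shortWeierstrass (hA : v A ≤ 1) (hB : v B ≤ 1)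
    {x₁ y₁ x₃ y₃ L : K} (h₁ : y₁ ^ 2 = x₁ ^ 3 + A * x₁ + B) (h₃ : y₃ ^ 2 = x₃ ^ 3 + A * x₃ + B)
    (hline : y₃ = L * (x₃ - x₁) + y₁) (hx₁ : 1 < v x₁) (hx₃ : v x₃ ≤ 1) : v L ^ 2 = v x₁ := by
  have hy₃ := v.le_one_of_shortWeierstrass hA hB h₃ hx₃
  have hy₁ := v.sq_eq_pow_three_of_shortWeierstrass hA hB h₁ hx₁
  have hy₁' : 1 < v y₁ := by
    rw [← one_lt_pow_iff two_ne_zero, hy₁]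
    exact one_lt_pow' hx₁ (by norm_num)
  have hslope : v L * v x₁ = v y₁ := by
    have : y₁ - y₃ = L * (x₁ - x₃) := by rw [hline]; ring
    rw [← v.map_sub_eq_of_lt_left (hy₃.trans_lt hy₁'), this, map_mul,
      v.map_sub_eq_of_lt_left (hx₃.trans_lt hx₁)]
  apply mul_right_cancel₀ (pow_ne_zero 2 (zero_lt_one.trans hx₁).ne')
  rw [← mul_pow, hslope, hy₁, pow_succ']

/-- A line of slope `L` through `(x₁, y₁)` and `(x₃, y₃)` meets the curve a third time at
`x₂ = L² - x₁ - x₃`. If `v x₃ ≤ 1`, then `v L ^ 2 = v x₁`, and Vieta's relation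
`x₁ x₂ + x₁ x₃ + x₂ x₃ = A - 2 L ν` (with `ν` the intercept) caps `v x₂`. -/
lemma Valuation.one_lt_of_shortWeierstrass_line (hA : v A ≤ 1) (hB : v B ≤ 1)
    {x₁ y₁ x₃ y₃ L : K} (h₁ : y₁ ^ 2 = x₁ ^ 3 + A * x₁ + B) (h₃ : y₃ ^ 2 = x₃ ^ 3 + A * x₃ + B)
    (hline : y₃ = L * (x₃ - x₁) + y₁) (hx₁ : 1 < v x₁) (hx₂ : 1 < v (L ^ 2 - x₁ - x₃)) :
    1 < v x₃ := by
  by_contra! hx₃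
  have hy₃ := v.le_one_of_shortWeierstrass hA hB h₃ hx₃
  have hL := v.sq_slope_eq_of_shortWeierstrass hA hB h₁ h₃ hline hx₁ hx₃
  have hL1 : 1 ≤ v L := (one_lt_pow_iff two_ne_zero |>.mp (hL ▸ hx₁)).le
  have hL2 : 1 ≤ v L ^ 2 := one_le_pow_of_one_le' hL1 2
  have hν : v (y₃ - L * x₃) ≤ v L :=
    v.map_sub_le (hy₃.trans hL1) (by simpa using mul_le_of_le_one_right' hx₃)
  have h2 : v (2 : K) ≤ 1 := by
    simpa [one_add_one_eq_two] using v.map_add_le v.map_one.le v.map_one.le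
  have hvieta : x₁ * (L ^ 2 - x₁ - x₃) = A - 2 * L * (y₃ - L * x₃) - x₃ * (L ^ 2 - x₃) := by
    have hx₁₃ : x₁ - x₃ ≠ 0 := fun h ↦ by
      rw [sub_eq_zero.mp h] at hx₁
      exact absurd hx₃ (not_le.mpr hx₁)
    refine sub_eq_zero.mp ((mul_eq_zero.mp ?_).resolve_left hx₁₃)
    linear_combination h₁ - h₃ + (y₁ + y₃ + L * (x₁ - x₃)) * hline
  have hlhs : v L ^ 2 < v (x₁ * (L ^ 2 - x₁ - x₃)) := by
    rw [map_mul, ← hL]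
    exact lt_mul_of_one_lt_right (zero_lt_one.trans (hL ▸ hx₁)) hx₂
  have hrhs : v (A - 2 * L * (y₃ - L * x₃) - x₃ * (L ^ 2 - x₃)) ≤ v L ^ 2 := by
    refine v.map_sub_le (v.map_sub_le (hA.trans hL2) ?_) ?_
    · rw [map_mul, map_mul, sq]
      exact mul_le_mul' (mul_le_of_le_one_left' h2) hν
    · rw [map_mul]
      refine mul_le_of_le_one_of_le hx₃ (v.map_sub_le ?_ (hx₃.trans hL2))
      rw [map_pow]
  exact (hlhs.trans_le (hvieta ▸ hrhs)).false

end ShortWeierstrass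

namespace WeierstrassCurve.Affine

variable {K Γ₀ : Type*} [Field K] [LinearOrderedCommGroupWithZero Γ₀] (v : Valuation K Γ₀)
  {W : Affine K}

lemma equation_iff_of_isShortNF [IsShortNF W] {x y : K} :
    W.Equation x y ↔ y ^ 2 = x ^ 3 + W.a₄ * x + W.a₆ := by
  simp [equation_iff]

def Point.ReducesToZero : W.Point → Prop
  | 0 => True
  | some x _ _ => 1 < v x

variable {v}

@[simp]
lemma Point.reducesToZero_some {x y : K} (h : W.Nonsingular x y) :
    (some x y h).ReducesToZero v ↔ 1 < v x :=
  Iff.rfl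

variable [DecidableEq K] [IsShortNF W]

lemma Point.reducesToZero_add (hA : v W.a₄ ≤ 1) (hB : v W.a₆ ≤ 1) {P Q : W.Point}
    (hP : P.ReducesToZero v) (hQ : Q.ReducesToZero v) : (P + Q).ReducesToZero v := by
  rcases P with _ | ⟨x₁, y₁, h₁⟩
  · simpa [← zero_def] using hQ
  rcases Q with _ | ⟨x₂, y₂, h₂⟩
  · simpa [← zero_def] using hP
  by_cases hxy : x₁ = x₂ ∧ y₁ = W.negY x₂ y₂
  · rw [add_of_Y_eq hxy.1 hxy.2]
    trivial
  rw [add_some hxy, reducesToZero_some]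
  rw [reducesToZero_some] at hP hQ
  refine v.one_lt_of_shortWeierstrass_line (L := W.slope x₁ x₂ y₁ y₂) hA hB
    (equation_iff_of_isShortNF.mp h₁.1)
    (equation_iff_of_isShortNF.mp (equation_negAdd h₁.1 h₂.1 hxy)) ?_ hP ?_
  · simp [negAddY]
  · convert hQ using 2
    simp [addX]

def reductionKernel (hA : v W.a₄ ≤ 1) (hB : v W.a₆ ≤ 1) : AddSubgroup W.Point where
  carrier := {P | P.ReducesToZero v}
  zero_mem' := trivial
  add_mem' := Point.reducesToZero_add hA hB
  neg_mem' := by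
    rintro (_ | _) hP <;> exact hP

@[simp]
lemma mem_reductionKernel (hA : v W.a₄ ≤ 1) (hB : v W.a₆ ≤ 1) {P : W.Point} :
    P ∈ reductionKernel hA hB ↔ P.ReducesToZero v :=
  Iff.rfl

end WeierstrassCurve.Affine

lemma ordAt_lt_zero_iff {K : Type*} [Field K] [NumberField K] {q : HeightOneSpectrum (𝓞 K)}
    {z : K} : ordAt q z < 0 ↔ 1 < q.valuation K z := by
  by_cases hz : z = 0
  · simp [ordAt, hz]
  rw [ordAt, dif_neg hz]
  conv_rhs => rw [← WithZero.coe_unzero ((q.valuation K).ne_zero_iff.mpr hz)]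
  rw [WithZero.one_lt_coe, neg_lt_zero, ← toAdd_one, Multiplicative.toAdd_lt]

lemma Int.mem_addSubgroup_iff_prime_pow_dvd {H : AddSubgroup ℤ} {ℓ j : ℕ} (hℓ : ℓ.Prime)
    (hmem : (ℓ : ℤ) ^ (j + 1) ∈ H) (hnot : (ℓ : ℤ) ^ j ∉ H) (n : ℤ) :
    n ∈ H ↔ (ℓ : ℤ) ^ (j + 1) ∣ n := by
  obtain ⟨a, rfl⟩ := Int.subgroup_cyclic H
  simp only [← AddSubgroup.zmultiples_eq_closure, Int.mem_zmultiples_iff] at hmem hnot ⊢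
  obtain ⟨c, hc, hac⟩ := (Nat.dvd_prime_pow hℓ).mp (Int.natAbs_dvd_natAbs.mpr hmem)
  have hcj : c = j + 1 := by
    by_contra hne
    refine hnot (Int.natAbs_dvd_natAbs.mp ?_)
    rw [hac, Int.natAbs_pow, Int.natAbs_natCast]
    exact pow_dvd_pow ℓ (by omega)
  rw [← Int.natAbs_dvd, hac, hcj]
  push_cast
  rfl

theorem subset_iff_dvd_of_primitive {ι : Type*} (H : ι → AddSubgroup ℤ) (Bad : Set ι)
    (S : ℤ → Set ι) (hS : ∀ n, n ≠ 0 → S n = {q | q ∉ Bad ∧ n ∈ H q})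
    (hPrim : ∀ ℓ : ℕ, ℓ.Prime → ∀ j : ℕ, 1 ≤ j →
      ((S ((ℓ : ℤ) ^ j)) \ (S ((ℓ : ℤ) ^ (j - 1)))).Nonempty)
    {k n : ℤ} (hk : 1 ≤ k) (hn : 1 ≤ n) : S k ⊆ S n ↔ k ∣ n := by
  constructor
  · intro hsub
    lift k to ℕ using by omega
    lift n to ℕ using by omega
    rw [Int.natCast_dvd_natCast, Nat.dvd_iff_prime_pow_dvd_dvd]
    rintro ℓ (_ | j) hℓ hdvd
    · simp
    obtain ⟨q, hq, hq'⟩ := hPrim ℓ hℓ (j + 1) (by omega)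
    have hℓ0 : (ℓ : ℤ) ≠ 0 := by exact_mod_cast hℓ.ne_zero
    rw [hS _ (pow_ne_zero _ hℓ0)] at hq
    rw [hS _ (pow_ne_zero _ hℓ0), Nat.add_sub_cancel] at hq'
    have hH := Int.mem_addSubgroup_iff_prime_pow_dvd hℓ hq.2 (fun h ↦ hq' ⟨hq.1, h⟩)
    have hqk : q ∈ S k := by
      rw [hS _ (by omega)]
      exact ⟨hq.1, (hH k).mpr (by exact_mod_cast hdvd)⟩
    have hqn := hsub hqk
    rw [hS _ (by omega)] at hqn
    exact_mod_cast (hH n).mp hqn.2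
  · rintro ⟨c, rfl⟩ q hq
    rw [hS _ (by omega)] at hq
    rw [hS _ (by omega)]
    exact ⟨hq.1, by simpa [mul_comm] using zsmul_mem hq.2 c⟩

open scoped Classical in
theorem stmt_7
    (K : Type) [Field K] [NumberField K]
    (a b : 𝓞 K)
    (W : WeierstrassCurve.Affine K)
    (hW : W = { a₁ := 0, a₂ := 0, a₃ := 0, a₄ := algebraMap (𝓞 K) K a,
                a₆ := algebraMap (𝓞 K) K b })
    (P : W.Point) (hP : ¬ IsOfFinAddOrder P)
    (x y : ℤ → K)
    (hxy : ∀ n : ℤ, n ≠ 0 → ∃ h : W.Nonsingular (x n) (y n),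
      n • P = WeierstrassCurve.Affine.Point.some (x n) (y n) h)
    (Sbad : Set (HeightOneSpectrum (𝓞 K)))
    (hSbadFin : Sbad.Finite)
    (hSbadRam : ∀ q : HeightOneSpectrum (𝓞 K),
      (∃ p : ℕ, p.Prime ∧ q.asIdeal ^ 2 ∣ Ideal.span {(p : 𝓞 K)}) → q ∈ Sbad)
    (hSbad2 : ∀ q : HeightOneSpectrum (𝓞 K), (2 : 𝓞 K) ∈ q.asIdeal → q ∈ Sbad)
    (hSbadSing : ∀ q : HeightOneSpectrum (𝓞 K),
      (-16 * (4 * a ^ 3 + 27 * b ^ 2) : 𝓞 K) ∈ q.asIdeal → q ∈ Sbad)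
    (hSbadP : ∀ q : HeightOneSpectrum (𝓞 K),
      (ordAt q (x 1) < 0 ∨ ordAt q (y 1) < 0) → q ∈ Sbad)
    (S : ℤ → Set (HeightOneSpectrum (𝓞 K)))
    (hS : ∀ n : ℤ, n ≠ 0 →
      S n = {q : HeightOneSpectrum (𝓞 K) | q ∉ Sbad ∧ ordAt q (x n) < 0})
    (hPrim : ∀ ℓ : ℕ, ℓ.Prime → ∀ j : ℕ, 1 ≤ j →
      ((S ((ℓ : ℤ) ^ j)) \ (S ((ℓ : ℤ) ^ (j - 1)))).Nonempty)
    :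
    (∀ k n : ℤ, 1 ≤ k → 1 ≤ n → (S k ⊆ S n ↔ k ∣ n)) ∧
      (∀ n₁ n₂ : ℤ, 1 ≤ n₁ → 1 ≤ n₂ → S n₁ = S n₂ → n₁ = n₂) := by
  have : IsShortNF W := by subst hW; exact ⟨rfl, rfl, rfl⟩
  have hA (q : HeightOneSpectrum (𝓞 K)) : q.valuation K W.a₄ ≤ 1 := by
    subst hW; exact q.valuation_le_one a
  have hB (q : HeightOneSpectrum (𝓞 K)) : q.valuation K W.a₆ ≤ 1 := by
    subst hW; exact q.valuation_le_one b
  let H q := (Affine.reductionKernel (hA q) (hB q)).comap (zmultiplesHom W.Point P)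
  have hSH : ∀ n, n ≠ 0 → S n = {q | q ∉ Sbad ∧ n ∈ H q} := by
    intro n hn
    obtain ⟨h, hnP⟩ := hxy n hn
    rw [hS n hn]
    ext q
    simp [H, hnP, ordAt_lt_zero_iff]
  have hdvd {k n : ℤ} (hk : 1 ≤ k) (hn : 1 ≤ n) :=
    subset_iff_dvd_of_primitive H Sbad S hSH hPrim hk hn
  refine ⟨fun k n ↦ hdvd, fun n₁ n₂ h₁ h₂ heq ↦ Int.dvd_antisymm (by omega) (by omega) ?_ ?_⟩
  · exact (hdvd h₁ h₂).mp heq.subset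
  · exact (hdvd h₂ h₁).mp heq.symm.subset
end

section
/- Assume the primitive divisor hypothesis. Let m, k, n ≥ 1 be integers such that the ideals c_k and c_m are coprime (c_k + c_m = O_K), c_n divides c_k³·c_m³, and c_m·c_k divides c_n. Then gcd(k, m) = 1 and n = m·k. -/
/-!
For every prime `q`, the integers `n` such that `n = 0` or the `x`-coordinate of `n • P` has a
pole at `q` form a subgroup of `ℤ`: the preimage of the kernel of reduction of the integral model,
which is closed under addition because the chord through a point with a pole at `q` and a point
integral at `q` meets the curve again in a point integral at `q`. For a primitive divisor `q` of
`ℓ ^ j` this subgroup contains `ℓ ^ j` but not `ℓ ^ (j - 1)`, so it is `ℓ ^ j ℤ`; hence `q ∈ V`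
and `q ∣ c n ↔ ℓ ^ j ∣ n`. The ideals `c n` therefore see every prime power dividing `n`, and the
hypotheses become: `k` and `m` are coprime, `n ∣ k m`, and `m ∣ n`, `k ∣ n`.
-/

open IsDedekindDomain IsDedekindDomain.HeightOneSpectrum NumberField WeierstrassCurve Filter

theorem ordAt_neg_iff {K : Type*} [Field K] [NumberField K]
    (q : HeightOneSpectrum (𝓞 K)) (z : K) :
    ordAt q z < 0 ↔ 1 < q.valuation K z := by
  rw [ordAt]
  split_ifs with hz
  · simp [hz]
  · have hne : q.valuation K z ≠ 0 := (q.valuation K).ne_zero_iff.mpr hz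
    obtain ⟨u, hu⟩ : ∃ u : Multiplicative ℤ, q.valuation K z = u :=
      ⟨WithZero.unzero hne, (WithZero.coe_unzero hne).symm⟩
    simp only [hu, WithZero.unzero_coe, neg_lt_zero, ← WithZero.coe_one, WithZero.coe_lt_coe,
      ← Multiplicative.toAdd_lt, toAdd_one]

theorem Int.mem_iff_pow_succ_dvd {H : AddSubgroup ℤ} {ℓ j : ℕ} (hℓ : ℓ.Prime)
    (hin : (ℓ : ℤ) ^ (j + 1) ∈ H) (hout : (ℓ : ℤ) ^ j ∉ H) (n : ℤ) :
    n ∈ H ↔ (ℓ : ℤ) ^ (j + 1) ∣ n := by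
  obtain ⟨d, rfl⟩ := Int.subgroup_cyclic H
  rw [← AddSubgroup.zmultiples_eq_closure, ← Int.zmultiples_natAbs] at hin hout ⊢
  simp only [Int.mem_zmultiples_iff] at hin hout ⊢
  have hd : d.natAbs = ℓ ^ (j + 1) := Nat.eq_prime_pow_of_dvd_least_prime_pow hℓ
    (by exact_mod_cast hout) (by exact_mod_cast hin)
  rw [hd, Nat.cast_pow]

theorem Valuation.chord_addX_le_one {K Γ₀ : Type*} [Field K] [LinearOrderedCommGroupWithZero Γ₀]
    (v : Valuation K Γ₀) {A B x₁ y₁ x₂ y₂ : K}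
    (e₁ : y₁ ^ 2 = x₁ ^ 3 + A * x₁ + B) (e₂ : y₂ ^ 2 = x₂ ^ 3 + A * x₂ + B)
    (hA : v A ≤ 1) (hB : v B ≤ 1) (h₁ : 1 < v x₁) (h₂ : v x₂ ≤ 1) :
    v (((y₁ - y₂) / (x₁ - x₂)) ^ 2 - x₁ - x₂) ≤ 1 := by
  set u := v x₁
  have hu1 : 1 ≤ u ^ 2 := one_le_pow₀ h₁.le
  have hu2 : u ≤ u ^ 2 := le_self_pow h₁.le two_ne_zero
  have hy₂ : v y₂ ≤ 1 := by
    rw [← pow_le_one_iff_of_nonneg zero_le two_ne_zero, ← map_pow, e₂]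
    refine v.map_add_le (v.map_add_le ?_ ?_) hB
    · rw [map_pow]; exact pow_le_one₀ zero_le h₂
    · rw [map_mul]; exact mul_le_one' hA h₂
  have hy₁ : v y₁ ≤ u ^ 2 := by
    rw [← pow_le_pow_iff_left₀ zero_le zero_le two_ne_zero, ← map_pow, e₁, ← pow_mul]
    refine v.map_add_le (v.map_add_le ?_ ?_) (hB.trans (one_le_pow₀ h₁.le))
    · rw [map_pow]; exact pow_le_pow_right₀ h₁.le (by norm_num)
    · rw [map_mul]
      exact (mul_le_of_le_one_left' hA).trans (le_self_pow h₁.le (by norm_num))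
  have hnum : v (A * x₁ + A * x₂ + (B + B) - (y₁ * y₂ + y₁ * y₂) + x₁ ^ 2 * x₂ + x₁ * x₂ ^ 2)
      ≤ u ^ 2 := by
    have hy : v (y₁ * y₂) ≤ u ^ 2 := by rw [map_mul]; exact mul_le_of_le_of_le_one hy₁ hy₂
    refine v.map_add_le (v.map_add_le (v.map_sub_le (v.map_add_le (v.map_add_le ?_ ?_)
      (v.map_add_le (hB.trans hu1) (hB.trans hu1))) (v.map_add_le hy hy)) ?_) ?_
    all_goals simp only [map_mul, map_pow]
    · exact (mul_le_of_le_one_left' hA).trans hu2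
    · exact (mul_le_one' hA h₂).trans hu1
    · exact mul_le_of_le_one_right' h₂
    · exact (mul_le_of_le_one_right' (pow_le_one₀ zero_le h₂)).trans hu2
  have hsub : v (x₁ - x₂) = u := v.map_sub_eq_of_lt_left (h₂.trans_lt h₁)
  have hne : x₁ - x₂ ≠ 0 := v.ne_zero_iff.mp (hsub ▸ ne_zero_of_lt h₁)
  have hformula : ((y₁ - y₂) / (x₁ - x₂)) ^ 2 - x₁ - x₂ =
      (A * x₁ + A * x₂ + (B + B) - (y₁ * y₂ + y₁ * y₂) + x₁ ^ 2 * x₂ + x₁ * x₂ ^ 2)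
        / (x₁ - x₂) ^ 2 := by
    field_simp
    linear_combination e₁ + e₂
  rw [hformula, map_div₀, map_pow, hsub]
  exact div_le_one_of_le₀ hnum zero_le

namespace WeierstrassCurve.Affine

variable {K Γ₀ : Type*} [Field K] [LinearOrderedCommGroupWithZero Γ₀] (v : Valuation K Γ₀)
  {W : Affine K}

theorem Equation.sq_eq_of_isShortNF [W.IsShortNF] {x y : K} (h : W.Equation x y) :
    y ^ 2 = x ^ 3 + W.a₄ * x + W.a₆ := by
  simpa [a₁_of_isShortNF, a₂_of_isShortNF, a₃_of_isShortNF] using (equation_iff x y).mp h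

namespace Point

/-- Membership in the kernel of reduction of the integral model `W` at `v`. -/
def ReducesToZero_s12 : W.Point → Prop
  | zero => True
  | some x _ _ => 1 < v x

@[simp]
theorem reducesToZero_zero : ReducesToZero_s12 v (0 : W.Point) := trivial

@[simp]
theorem reducesToZero_some_s12 {x y : K} (h : W.Nonsingular x y) :
    ReducesToZero_s12 v (some x y h) ↔ 1 < v x := Iff.rfl

@[simp]
theorem reducesToZero_neg (P : W.Point) : ReducesToZero_s12 v (-P) ↔ ReducesToZero_s12 v P := by
  cases P <;> rfl

variable [DecidableEq K] [W.IsShortNF] {v}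

theorem not_reducesToZero_add (hA : v W.a₄ ≤ 1) (hB : v W.a₆ ≤ 1) {P Q : W.Point}
    (hP : ReducesToZero_s12 v P) (hQ : ¬ ReducesToZero_s12 v Q) : ¬ ReducesToZero_s12 v (P + Q) := by
  cases P with
  | zero => rwa [← zero_def, zero_add]
  | some x₁ y₁ h₁ =>
  cases Q with
  | zero => exact absurd trivial hQ
  | some x₂ y₂ h₂ =>
  rw [reducesToZero_some_s12] at hP hQ
  have hx : x₁ ≠ x₂ := fun h => hQ (h ▸ hP)
  rw [add_of_X_ne hx, reducesToZero_some_s12, addX, slope_of_X_ne hx, a₁_of_isShortNF,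
    a₂_of_isShortNF, zero_mul, add_zero, sub_zero, not_lt]
  exact v.chord_addX_le_one h₁.1.sq_eq_of_isShortNF h₂.1.sq_eq_of_isShortNF hA hB hP
    (not_lt.mp hQ)

def reductionKernel (hA : v W.a₄ ≤ 1) (hB : v W.a₆ ≤ 1) : AddSubgroup W.Point where
  carrier := {P | ReducesToZero_s12 v P}
  zero_mem' := trivial
  add_mem' {P Q} hP hQ := by
    -- otherwise `P = -Q + (P + Q)` would be a sum of a reducing and a non-reducing point
    by_contra h
    have := not_reducesToZero_add hA hB ((reducesToZero_neg v Q).mpr hQ) h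
    rw [add_comm P Q, neg_add_cancel_left] at this
    exact this hP
  neg_mem' {P} := (reducesToZero_neg v P).mpr

@[simp]
theorem mem_reductionKernel (hA : v W.a₄ ≤ 1) (hB : v W.a₆ ≤ 1) (P : W.Point) :
    P ∈ reductionKernel hA hB ↔ ReducesToZero_s12 v P := Iff.rfl

theorem zsmul_mem_reductionKernel_iff (hA : v W.a₄ ≤ 1) (hB : v W.a₆ ≤ 1) {P : W.Point}
    {x y : ℤ → K}
    (hxy : ∀ n : ℤ, n ≠ 0 → ∃ h : W.Nonsingular (x n) (y n), n • P = some _ _ h) (n : ℤ) :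
    n • P ∈ reductionKernel hA hB ↔ n = 0 ∨ 1 < v (x n) := by
  rcases eq_or_ne n 0 with rfl | hn
  · simp
  · obtain ⟨h, hnP⟩ := hxy n hn
    simp [hnP, hn]

theorem eq_zero_or_one_lt_valuation_iff (hA : v W.a₄ ≤ 1) (hB : v W.a₆ ≤ 1) {P : W.Point}
    {x y : ℤ → K}
    (hxy : ∀ n : ℤ, n ≠ 0 → ∃ h : W.Nonsingular (x n) (y n), n • P = some _ _ h)
    {ℓ j : ℕ} (hℓ : ℓ.Prime) (hin : 1 < v (x (ℓ ^ (j + 1)))) (hout : ¬ 1 < v (x (ℓ ^ j)))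
    (n : ℤ) : n = 0 ∨ 1 < v (x n) ↔ (ℓ : ℤ) ^ (j + 1) ∣ n := by
  have hℓ0 : (ℓ : ℤ) ^ j ≠ 0 := pow_ne_zero _ (by exact_mod_cast hℓ.ne_zero)
  have hmem := zsmul_mem_reductionKernel_iff hA hB hxy
  rw [← hmem, ← zmultiplesHom_apply, ← AddSubgroup.mem_comap]
  refine Int.mem_iff_pow_succ_dvd hℓ ?_ ?_ n
  · simpa [hmem] using Or.inr hin
  · simpa [hmem, hℓ0] using hout

end Point

end WeierstrassCurve.Affine

theorem IsDedekindDomain.HeightOneSpectrum.asIdeal_dvd_prod_pow_iff {R : Type*} [CommRing R]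
    [IsDedekindDomain R] (q : HeightOneSpectrum R) {T : Finset (HeightOneSpectrum R)}
    {e : HeightOneSpectrum R → ℕ} (he : ∀ p ∈ T, e p ≠ 0) :
    q.asIdeal ∣ ∏ p ∈ T, p.asIdeal ^ e p ↔ q ∈ T := by
  refine ⟨fun h => ?_, fun hq => (dvd_pow_self _ (he q hq)).trans (Finset.dvd_prod_of_mem _ hq)⟩
  obtain ⟨p, hp, hqp⟩ := q.prime.exists_mem_finset_dvd h
  have hpq : p.asIdeal = q.asIdeal :=
    p.isMaximal.eq_of_le q.isPrime.ne_top (Ideal.le_of_dvd (q.prime.dvd_of_dvd_pow hqp))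
  rwa [← HeightOneSpectrum.ext hpq]

def DetectsPrimePowers {R : Type*} [CommSemiring R] (c : ℕ → Ideal R) : Prop :=
  ∀ ℓ j : ℕ, ℓ.Prime → 1 ≤ j → ∃ q : Ideal R, Prime q ∧ ∀ n ≠ 0, q ∣ c n ↔ ℓ ^ j ∣ n

namespace DetectsPrimePowers

variable {R : Type*} [CommSemiring R] {c : ℕ → Ideal R} (hc : DetectsPrimePowers c) {m k n : ℕ}
include hc

theorem coprime (hm : m ≠ 0) (hk : k ≠ 0) (h : c k ⊔ c m = ⊤) : k.Coprime m := by
  refine Nat.coprime_of_dvd fun p hp hpk hpm => ?_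
  obtain ⟨q, hq, hqc⟩ := hc p 1 hp le_rfl
  have hle : c k ⊔ c m ≤ q := sup_le (Ideal.le_of_dvd ((hqc k hk).mpr (by simpa using hpk)))
    (Ideal.le_of_dvd ((hqc m hm).mpr (by simpa using hpm)))
  exact hq.ne_one (by rw [Ideal.one_eq_top]; exact top_le_iff.mp (h ▸ hle))

theorem dvd_of_dvd (hm : m ≠ 0) (hn : n ≠ 0) (h : c m ∣ c n) : m ∣ n := by
  refine (Nat.dvd_iff_prime_pow_dvd_dvd n m).mpr fun p j hp hpj => ?_
  rcases Nat.eq_zero_or_pos j with rfl | hj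
  · simp
  obtain ⟨q, -, hqc⟩ := hc p j hp hj
  exact (hqc n hn).mp (((hqc m hm).mpr hpj).trans h)

theorem dvd_mul_of_dvd_pow_mul_pow (hm : m ≠ 0) (hk : k ≠ 0) (hn : n ≠ 0) {a b : ℕ}
    (h : c n ∣ c k ^ a * c m ^ b) : n ∣ k * m := by
  refine (Nat.dvd_iff_prime_pow_dvd_dvd _ n).mpr fun p j hp hpj => ?_
  rcases Nat.eq_zero_or_pos j with rfl | hj
  · simp
  obtain ⟨q, hq, hqc⟩ := hc p j hp hj
  rcases hq.dvd_mul.mp (((hqc n hn).mpr hpj).trans h) with hqk | hqm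
  · exact ((hqc k hk).mp (hq.dvd_of_dvd_pow hqk)).mul_right m
  · exact ((hqc m hm).mp (hq.dvd_of_dvd_pow hqm)).mul_left k

theorem coprime_and_eq_mul (hm : m ≠ 0) (hk : k ≠ 0) (hn : n ≠ 0) (hcop : c k ⊔ c m = ⊤)
    (h₁ : c n ∣ c k ^ 3 * c m ^ 3) (h₂ : c m * c k ∣ c n) : k.Coprime m ∧ n = m * k := by
  have hkm := hc.coprime hm hk hcop
  refine ⟨hkm, Nat.dvd_antisymm ?_ ?_⟩
  · rw [mul_comm]
    exact hc.dvd_mul_of_dvd_pow_mul_pow hm hk hn h₁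
  · exact hkm.symm.mul_dvd_of_dvd_of_dvd (hc.dvd_of_dvd hm hn (dvd_of_mul_right_dvd h₂))
      (hc.dvd_of_dvd hk hn (dvd_of_mul_left_dvd h₂))

end DetectsPrimePowers

section PrimitiveDivisors

variable {K : Type*} [Field K] [NumberField K] {x : ℤ → K}
  {Sbad : Set (HeightOneSpectrum (𝓞 K))} {S : ℤ → Set (HeightOneSpectrum (𝓞 K))}
  (hS : ∀ n : ℤ, n ≠ 0 →
    S n = {q : HeightOneSpectrum (𝓞 K) | q ∉ Sbad ∧ ordAt q (x n) < 0})
include hS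

theorem mem_iff_one_lt_valuation {n : ℤ} (hn : n ≠ 0) (q : HeightOneSpectrum (𝓞 K)) :
    q ∈ S n ↔ q ∉ Sbad ∧ 1 < q.valuation K (x n) := by
  rw [hS n hn, ← ordAt_neg_iff]
  rfl

theorem eq_zero_or_mem_iff_of_mem_diff [DecidableEq K] {W : WeierstrassCurve.Affine K}
    [W.IsShortNF] {q : HeightOneSpectrum (𝓞 K)} (hA : q.valuation K W.a₄ ≤ 1)
    (hB : q.valuation K W.a₆ ≤ 1) {P : W.Point} {y : ℤ → K}
    (hxy : ∀ n : ℤ, n ≠ 0 → ∃ h : W.Nonsingular (x n) (y n), n • P = Affine.Point.some _ _ h)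
    {ℓ i : ℕ} (hℓ : ℓ.Prime) (hq : q ∈ S ((ℓ : ℤ) ^ (i + 1)) \ S ((ℓ : ℤ) ^ i)) (n : ℤ) :
    n = 0 ∨ q ∈ S n ↔ (ℓ : ℤ) ^ (i + 1) ∣ n := by
  have hℓ0 (r : ℕ) : (ℓ : ℤ) ^ r ≠ 0 := pow_ne_zero _ (Int.natCast_ne_zero.mpr hℓ.ne_zero)
  obtain ⟨hin, hout⟩ := hq
  rw [mem_iff_one_lt_valuation hS (hℓ0 _)] at hin hout
  obtain ⟨hgood, hin⟩ := hin
  rw [← Affine.Point.eq_zero_or_one_lt_valuation_iff hA hB hxy hℓ hin fun h => hout ⟨hgood, h⟩]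
  rcases eq_or_ne n 0 with rfl | hn
  · simp
  · simp [hn, mem_iff_one_lt_valuation hS hn, hgood]

theorem asIdeal_dvd_iff_mem {V : Set (HeightOneSpectrum (𝓞 K))} {c : ℤ → Ideal (𝓞 K)}
    {Tc : ℤ → Finset (HeightOneSpectrum (𝓞 K))}
    (hTc : ∀ n : ℤ, 1 ≤ n → (Tc n : Set (HeightOneSpectrum (𝓞 K))) = V ∩ S n)
    (hc : ∀ n : ℤ, 1 ≤ n → c n = ∏ q ∈ Tc n, q.asIdeal ^ (-(ordAt q (x n))).toNat)
    {q : HeightOneSpectrum (𝓞 K)} (hqV : q ∈ V) {n : ℤ} (hn : 1 ≤ n) :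
    q.asIdeal ∣ c n ↔ q ∈ S n := by
  rw [hc n hn, HeightOneSpectrum.asIdeal_dvd_prod_pow_iff, ← Finset.mem_coe, hTc n hn,
    Set.mem_inter_iff, and_iff_right hqV]
  intro p hp
  rw [← Finset.mem_coe, hTc n hn, hS n (by omega)] at hp
  have := hp.2.2
  omega

end PrimitiveDivisors

open scoped Classical in
theorem stmt_12
    (K : Type) [Field K] [NumberField K]
    (a b : 𝓞 K)
    (W : WeierstrassCurve.Affine K)
    (hW : W = { a₁ := 0, a₂ := 0, a₃ := 0, a₄ := algebraMap (𝓞 K) K a,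
                a₆ := algebraMap (𝓞 K) K b })
    (P : W.Point) (hP : ¬ IsOfFinAddOrder P)
    (x y : ℤ → K)
    (hxy : ∀ n : ℤ, n ≠ 0 → ∃ h : W.Nonsingular (x n) (y n),
      n • P = WeierstrassCurve.Affine.Point.some _ _ h)
    (Sbad : Set (HeightOneSpectrum (𝓞 K)))
    (hSbadFin : Sbad.Finite)
    (hSbadRam : ∀ q : HeightOneSpectrum (𝓞 K),
      (∃ p : ℕ, p.Prime ∧ q.asIdeal ^ 2 ∣ Ideal.span {(p : 𝓞 K)}) → q ∈ Sbad)
    (hSbad2 : ∀ q : HeightOneSpectrum (𝓞 K), (2 : 𝓞 K) ∈ q.asIdeal → q ∈ Sbad)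
    (hSbadSing : ∀ q : HeightOneSpectrum (𝓞 K),
      (-16 * (4 * a ^ 3 + 27 * b ^ 2) : 𝓞 K) ∈ q.asIdeal → q ∈ Sbad)
    (hSbadP : ∀ q : HeightOneSpectrum (𝓞 K),
      (ordAt q (x 1) < 0 ∨ ordAt q (y 1) < 0) → q ∈ Sbad)
    (S : ℤ → Set (HeightOneSpectrum (𝓞 K)))
    (hS : ∀ n : ℤ, n ≠ 0 →
      S n = {q : HeightOneSpectrum (𝓞 K) | q ∉ Sbad ∧ ordAt q (x n) < 0})
    (hPrim : ∀ ℓ : ℕ, ℓ.Prime → ∀ j : ℕ, 1 ≤ j →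
      ((S ((ℓ : ℤ) ^ j)) \ (S ((ℓ : ℤ) ^ (j - 1)))).Nonempty)
    (V : Set (HeightOneSpectrum (𝓞 K)))
    (hV : V = {q : HeightOneSpectrum (𝓞 K) | q ∉ Sbad ∧ ∃ ℓ : ℕ, ℓ.Prime ∧
      ∃ j : ℕ, 1 ≤ j ∧ {n : ℤ | n = 0 ∨ q ∈ S n} = {n : ℤ | (ℓ : ℤ) ^ j ∣ n}})
    (c : ℤ → Ideal (𝓞 K))
    (Tc : ℤ → Finset (HeightOneSpectrum (𝓞 K)))
    (hTc : ∀ n : ℤ, 1 ≤ n → (Tc n : Set (HeightOneSpectrum (𝓞 K))) = V ∩ S n)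
    (hc : ∀ n : ℤ, 1 ≤ n →
      c n = ∏ q ∈ Tc n, q.asIdeal ^ (-(ordAt q (x n))).toNat)
    :
    ∀ m k n : ℤ, 1 ≤ m → 1 ≤ k → 1 ≤ n →
      c k ⊔ c m = ⊤ → c n ∣ c k ^ 3 * c m ^ 3 → c m * c k ∣ c n →
      Int.gcd k m = 1 ∧ n = m * k := by
  have : W.IsShortNF := by subst hW; exact ⟨rfl, rfl, rfl⟩
  have hA (q : HeightOneSpectrum (𝓞 K)) : q.valuation K W.a₄ ≤ 1 := by
    subst hW; exact q.valuation_le_one a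
  have hB (q : HeightOneSpectrum (𝓞 K)) : q.valuation K W.a₆ ≤ 1 := by
    subst hW; exact q.valuation_le_one b
  have hdetect : DetectsPrimePowers (fun n : ℕ => c n) := by
    intro ℓ j hℓ hj
    obtain ⟨i, rfl⟩ : ∃ i, j = i + 1 := ⟨j - 1, by omega⟩
    obtain ⟨q, hq⟩ := hPrim ℓ hℓ (i + 1) hj
    rw [add_tsub_cancel_right] at hq
    have hgood : q ∉ Sbad := ((mem_iff_one_lt_valuation hS (by simp [hℓ.ne_zero]) q).mp hq.1).1
    have hpoles := eq_zero_or_mem_iff_of_mem_diff hS (hA q) (hB q) hxy hℓ hq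
    have hqV : q ∈ V := hV ▸ ⟨hgood, ℓ, hℓ, i + 1, hj, Set.ext hpoles⟩
    refine ⟨q.asIdeal, q.prime, fun n hn => ?_⟩
    rw [asIdeal_dvd_iff_mem hS hTc hc hqV (by omega)]
    simpa [hn, ← Int.natCast_dvd_natCast] using hpoles n
  intro m k n hm hk hn hcop hdvd₁ hdvd₂
  lift m to ℕ using by omega
  lift k to ℕ using by omega
  lift n to ℕ using by omega
  obtain ⟨hkm, hnmk⟩ :=
    hdetect.coprime_and_eq_mul (by omega) (by omega) (by omega) hcop hdvd₁ hdvd₂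
  exact ⟨by simpa using hkm, by exact_mod_cast hnmk⟩
end
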